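/- Let (s_1,…,s_k) be an activation sequence yielding the maximal nested collection 𝒮 (that is, 𝒮_0 = ∅, 𝒮_{r+1} = μ_{s_{r+1}}(𝒮_r), and 𝒮_k = 𝒮), and index the members of 𝒮 as S_s (the smallest member containing s). If S_{s_i} and S_{s_{i+1}} are disjoint (the pair s_i, s_{i+1} is exchangeable), then the sequence obtained by swapping s_i and s_{i+1} is also an activation sequence yielding the same collection 𝒮. Moreover, any two activation sequences yielding the same maximal nested collection 𝒮 can be transformed into one another by successively swapping exchangeable adjacent pairs. -/

import Mathlib

/-!
In an activation run, the member created when `s` is activated is `S_s`: a later member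
containing `s` is a strongly connected component of a superset of `S_s`, and a strongly connected
set meeting a component lies inside it. Swapping an adjacent pair `a, b` with `S_a ∩ S_b = ∅`
leaves both created sets unchanged, because a component of `T ∪ {a, b}` avoiding `a` is already a
component of `T ∪ {b}`. Conversely, if `t` is activated last in `l`, every `u` following `t` in `l'`
has `S_u` disjoint from `S_t`, so `t` can be swapped to the end of `l'`; deleting `t` from both
sequences leaves two activation sequences of one smaller collection, and induction on the length
finishes.
-/

open MvPolynomial

/-- Reachability inside a subset `U` of vertices, along edges of `E`. -/
def ReachIn {n : ℕ} (E : Fin n → Fin n → Prop) (U : Finset (Fin n)) (a b : Fin n) : Prop :=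
  Relation.ReflTransGen (fun x y => E x y ∧ x ∈ U ∧ y ∈ U) a b

/-- A nonempty subset `I` is strongly connected if any vertex of `I` can reach any
other vertex of `I` by a directed path staying inside `I`. -/
def StronglyConnected {n : ℕ} (E : Fin n → Fin n → Prop) (I : Finset (Fin n)) : Prop :=
  I.Nonempty ∧ ∀ a ∈ I, ∀ b ∈ I, ReachIn E I a b

open Classical in
/-- The strongly connected component of `x` in the induced subgraph on `U`. -/
noncomputable def scc {n : ℕ} (E : Fin n → Fin n → Prop) (U : Finset (Fin n)) (x : Fin n) :
    Finset (Fin n) :=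
  U.filter fun y => ReachIn E U x y ∧ ReachIn E U y x

/-- `S ⊕ j` : the strongly connected component of `S ∪ {j}` containing `j`. -/
noncomputable def oplus {n : ℕ} (E : Fin n → Fin n → Prop) (S : Finset (Fin n)) (j : Fin n) :
    Finset (Fin n) :=
  scc E (insert j S) j

/-- `S ⊖ j = (S ∪ {j}) − (S ⊕ j)`. -/
noncomputable def ominus {n : ℕ} (E : Fin n → Fin n → Prop) (S : Finset (Fin n)) (j : Fin n) :
    Finset (Fin n) :=
  insert j S \ oplus E S j

/-- A family of strongly connected subsets is nested if any two members are nested or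
disjoint, and any tuple of pairwise disjoint members are exactly the strongly connected
components of their union. -/
def Nested {n : ℕ} (E : Fin n → Fin n → Prop) (𝒮 : Finset (Finset (Fin n))) : Prop :=
  (∀ I ∈ 𝒮, StronglyConnected E I) ∧
  (∀ I ∈ 𝒮, ∀ J ∈ 𝒮, I ⊆ J ∨ J ⊆ I ∨ Disjoint I J) ∧
  (∀ 𝒯 ⊆ 𝒮, (∀ I ∈ 𝒯, ∀ J ∈ 𝒯, I ≠ J → Disjoint I J) →
    ∀ I ∈ 𝒯, ∀ x ∈ I, scc E (𝒯.sup id) x = I)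

/-- The support of a collection: the union of its members. -/
def nsupport {n : ℕ} (𝒮 : Finset (Finset (Fin n))) : Finset (Fin n) := 𝒮.sup id

/-- A nested collection is maximal (for its support) if the only nested collection with the
same support containing it is itself. -/
def MaximalNested {n : ℕ} (E : Fin n → Fin n → Prop) (𝒮 : Finset (Finset (Fin n))) : Prop :=
  Nested E 𝒮 ∧ ∀ 𝒮' : Finset (Finset (Fin n)),
    Nested E 𝒮' → nsupport 𝒮' = nsupport 𝒮 → 𝒮 ⊆ 𝒮' → 𝒮' = 𝒮

/-- Activation of the collection `𝒮` at a vertex `s`: add `(support 𝒮) ⊕ s` to `𝒮`. -/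
noncomputable def activate {n : ℕ} (E : Fin n → Fin n → Prop)
    (𝒮 : Finset (Finset (Fin n))) (s : Fin n) : Finset (Finset (Fin n)) :=
  insert (oplus E (nsupport 𝒮) s) 𝒮

open Classical in
/-- `S_s`: the smallest member of `𝒮` containing `s` (junk value `∅` if there is none). -/
noncomputable def minMem {n : ℕ} (𝒮 : Finset (Finset (Fin n))) (s : Fin n) :
    Finset (Fin n) :=
  if h : ∃ I, I ∈ 𝒮 ∧ s ∈ I ∧ ∀ J ∈ 𝒮, s ∈ J → I ⊆ J then h.choose else ∅

/-- `l` is an activation sequence yielding the collection `𝒮`. -/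
def IsActSeq {n : ℕ} (E : Fin n → Fin n → Prop) (l : List (Fin n))
    (𝒮 : Finset (Finset (Fin n))) : Prop :=
  l.Nodup ∧ l.toFinset = nsupport 𝒮 ∧ l.foldl (activate E) ∅ = 𝒮

/-- `l'` is obtained from `l` by swapping an adjacent exchangeable pair, i.e. a pair
`a, b` with `S_a` and `S_b` disjoint. -/
def SwapRel {n : ℕ} (𝒮 : Finset (Finset (Fin n))) (l l' : List (Fin n)) : Prop :=
  ∃ (l₁ l₂ : List (Fin n)) (a b : Fin n),
    l = l₁ ++ a :: b :: l₂ ∧ l' = l₁ ++ b :: a :: l₂ ∧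
    Disjoint (minMem 𝒮 a) (minMem 𝒮 b)

open Relation

theorem List.notMem_of_nodup_append_cons {α : Type*} {p q : List α} {s : α}
    (h : (p ++ s :: q).Nodup) : s ∉ p :=
  fun hs => List.disjoint_of_nodup_append h hs List.mem_cons_self

section

variable {n : ℕ} {E : Fin n → Fin n → Prop}

section StronglyConnectedComponents

variable {U V I : Finset (Fin n)} {a b x y : Fin n}

theorem ReachIn.mono (hUV : U ⊆ V) (h : ReachIn E U a b) : ReachIn E V a b :=
  ReflTransGen.mono (p := fun x y => E x y ∧ x ∈ V ∧ y ∈ V)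
    (fun _ _ e => ⟨e.1, hUV e.2.1, hUV e.2.2⟩) _ _ h

theorem mem_scc : y ∈ scc E U x ↔ y ∈ U ∧ ReachIn E U x y ∧ ReachIn E U y x := by
  classical
  exact Finset.mem_filter

theorem self_mem_scc (hx : x ∈ U) : x ∈ scc E U x :=
  mem_scc.2 ⟨hx, .refl, .refl⟩

theorem scc_subset : scc E U x ⊆ U :=
  fun _ hy => (mem_scc.1 hy).1

theorem mem_scc_symm (hx : x ∈ U) (hy : y ∈ scc E U x) : x ∈ scc E U y :=
  mem_scc.2 ⟨hx, (mem_scc.1 hy).2.2, (mem_scc.1 hy).2.1⟩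

theorem reachIn_scc (ha : a ∈ scc E U x) (hb : b ∈ scc E U x) (h : ReachIn E U a b) :
    ReachIn E (scc E U x) a b := by
  induction h with
  | refl => exact .refl
  | @tail c d hac e ih =>
    have hc : c ∈ scc E U x := mem_scc.2 ⟨e.2.1,
      ReflTransGen.trans (mem_scc.1 ha).2.1 hac,
      ReflTransGen.head e (mem_scc.1 hb).2.2⟩
    exact (ih hc).tail ⟨e.1, hc, hb⟩

theorem stronglyConnected_scc (hx : x ∈ U) : StronglyConnected E (scc E U x) :=
  ⟨⟨x, self_mem_scc hx⟩, fun _ ha _ hb =>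
    reachIn_scc ha hb (ReflTransGen.trans (mem_scc.1 ha).2.2 (mem_scc.1 hb).2.1)⟩

theorem StronglyConnected.subset_scc (hI : StronglyConnected E I) (hIU : I ⊆ U)
    (hyI : y ∈ I) (hy : y ∈ scc E U x) : I ⊆ scc E U x := fun z hz =>
  mem_scc.2 ⟨hIU hz, ReflTransGen.trans (mem_scc.1 hy).2.1 ((hI.2 y hyI z hz).mono hIU),
    ReflTransGen.trans ((hI.2 z hz y hyI).mono hIU) (mem_scc.1 hy).2.2⟩

theorem scc_insert_of_notMem (ha : a ∉ scc E (insert a U) x) (hx : x ∈ U) :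
    scc E (insert a U) x = scc E U x := by
  have hx' : x ∈ insert a U := Finset.mem_insert_of_mem hx
  refine (stronglyConnected_scc hx').subset_scc ?_ (self_mem_scc hx') (self_mem_scc hx)
    |>.antisymm ((stronglyConnected_scc hx).subset_scc (scc_subset.trans (Finset.subset_insert _ _))
      (self_mem_scc hx) (self_mem_scc hx'))
  intro y hy
  refine (Finset.mem_insert.1 (scc_subset hy)).resolve_left ?_
  rintro rfl
  exact ha hy

end StronglyConnectedComponents

section Activation

variable {S : Finset (Fin n)} {𝒮 𝒮₀ : Finset (Finset (Fin n))} {I : Finset (Fin n)}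
  {a b s : Fin n} {p q : List (Fin n)}

theorem self_mem_oplus : s ∈ oplus E S s :=
  self_mem_scc (Finset.mem_insert_self _ _)

theorem oplus_subset : oplus E S s ⊆ insert s S :=
  scc_subset

theorem stronglyConnected_oplus : StronglyConnected E (oplus E S s) :=
  stronglyConnected_scc (Finset.mem_insert_self _ _)

theorem oplus_insert_of_notMem (h : a ∉ oplus E (insert a S) b) :
    oplus E (insert a S) b = oplus E S b := by
  rw [oplus, Finset.insert_comm] at h ⊢
  exact scc_insert_of_notMem h (Finset.mem_insert_self _ _)

theorem notMem_oplus_insert_comm (h : a ∉ oplus E (insert a S) b) :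
    b ∉ oplus E (insert b S) a := by
  rw [oplus, Finset.insert_comm]
  exact fun hb => h (mem_scc_symm (Finset.mem_insert_of_mem (Finset.mem_insert_self _ _)) hb)

theorem subset_nsupport (hI : I ∈ 𝒮) : I ⊆ nsupport 𝒮 :=
  Finset.le_sup (f := id) hI

theorem nsupport_activate : nsupport (activate E 𝒮 s) = insert s (nsupport 𝒮) := by
  rw [activate, nsupport, Finset.sup_insert, ← nsupport]
  refine (Finset.union_subset (oplus_subset) (Finset.subset_insert _ _)).antisymm ?_
  exact Finset.insert_subset (Finset.mem_union_left _ self_mem_oplus) Finset.subset_union_right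

theorem activate_activate_comm (h : a ∉ oplus E (insert a (nsupport 𝒮)) b) :
    activate E (activate E 𝒮 a) b = activate E (activate E 𝒮 b) a := by
  change insert (oplus E (nsupport (activate E 𝒮 a)) b) (activate E 𝒮 a) =
    insert (oplus E (nsupport (activate E 𝒮 b)) a) (activate E 𝒮 b)
  rw [nsupport_activate, nsupport_activate, oplus_insert_of_notMem h,
    oplus_insert_of_notMem (notMem_oplus_insert_comm h), activate, activate, Finset.insert_comm]

theorem nsupport_foldl_activate (l : List (Fin n)) :
    nsupport (l.foldl (activate E) ∅) = l.toFinset := by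
  induction l using List.reverseRecOn with
  | nil => rfl
  | append_singleton l t ih =>
    rw [List.foldl_concat, nsupport_activate, ih]
    ext
    simp

theorem minMem_eq_of_isLeast (h : IsLeast {J | J ∈ 𝒮 ∧ s ∈ J} I) : minMem 𝒮 s = I := by
  have hex : ∃ I, I ∈ 𝒮 ∧ s ∈ I ∧ ∀ J ∈ 𝒮, s ∈ J → I ⊆ J :=
    ⟨I, h.1.1, h.1.2, fun J hJ hsJ => h.2 ⟨hJ, hsJ⟩⟩
  rw [minMem, dif_pos hex]
  obtain ⟨hmem, hs, hmin⟩ := hex.choose_spec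
  exact (hmin I h.1.1 h.1.2).antisymm (h.2 ⟨hmem, hs⟩)

theorem isLeast_activate_self (hs : s ∉ nsupport 𝒮) :
    IsLeast {J | J ∈ activate E 𝒮 s ∧ s ∈ J} (oplus E (nsupport 𝒮) s) := by
  refine ⟨⟨Finset.mem_insert_self _ _, self_mem_oplus⟩, fun J ⟨hJ, hsJ⟩ => ?_⟩
  rcases Finset.mem_insert.1 hJ with rfl | hJ
  · exact subset_rfl
  · exact absurd (subset_nsupport hJ hsJ) hs

theorem isLeast_activate_of_isLeast (h : IsLeast {J | J ∈ 𝒮 ∧ s ∈ J} I)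
    (hI : StronglyConnected E I) (t : Fin n) : IsLeast {J | J ∈ activate E 𝒮 t ∧ s ∈ J} I := by
  refine ⟨⟨Finset.mem_insert_of_mem h.1.1, h.1.2⟩, fun J ⟨hJ, hsJ⟩ => ?_⟩
  rcases Finset.mem_insert.1 hJ with rfl | hJ
  · exact hI.subset_scc ((subset_nsupport h.1.1).trans (Finset.subset_insert _ _)) h.1.2 hsJ
  · exact h.2 ⟨hJ, hsJ⟩

theorem isLeast_foldl_activate_of_isLeast (h : IsLeast {J | J ∈ 𝒮₀ ∧ s ∈ J} I)
    (hI : StronglyConnected E I) (l : List (Fin n)) :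
    IsLeast {J | J ∈ l.foldl (activate E) 𝒮₀ ∧ s ∈ J} I := by
  induction l generalizing 𝒮₀ with
  | nil => exact h
  | cons t l ih => exact ih (isLeast_activate_of_isLeast h hI t)

theorem minMem_foldl_activate (hs : s ∉ p) :
    minMem ((p ++ s :: q).foldl (activate E) ∅) s = oplus E p.toFinset s := by
  rw [List.foldl_append, List.foldl_cons, ← nsupport_foldl_activate (E := E) p]
  refine minMem_eq_of_isLeast
    (isLeast_foldl_activate_of_isLeast (isLeast_activate_self ?_) stronglyConnected_oplus q)
  rwa [nsupport_foldl_activate, List.mem_toFinset]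

end Activation

section ActivationSequences

variable {𝒮 𝒮' : Finset (Finset (Fin n))} {l l' p q r : List (Fin n)} {s t : Fin n}

theorem foldl_activate_concat (p : List (Fin n)) (t : Fin n) :
    (p ++ [t]).foldl (activate E) ∅ = insert (oplus E p.toFinset t) (p.foldl (activate E) ∅) := by
  rw [List.foldl_concat, activate, nsupport_foldl_activate]

theorem oplus_notMem_foldl_activate (ht : t ∉ p) :
    oplus E p.toFinset t ∉ p.foldl (activate E) ∅ := fun h =>
  ht (List.mem_toFinset.1 (nsupport_foldl_activate p ▸ subset_nsupport h self_mem_oplus))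

theorem foldl_activate_eq_of_concat_eq (hp : t ∉ p) (hq : t ∉ q)
    (h : (p ++ [t]).foldl (activate E) ∅ = (q ++ [t]).foldl (activate E) ∅) :
    p.foldl (activate E) ∅ = q.foldl (activate E) ∅ := by
  have hoplus : oplus E p.toFinset t = oplus E q.toFinset t := by
    rw [← minMem_foldl_activate (q := []) hp, h, minMem_foldl_activate hq]
  rw [← Finset.erase_insert (oplus_notMem_foldl_activate hp),
    ← Finset.erase_insert (oplus_notMem_foldl_activate hq), ← foldl_activate_concat,
    ← foldl_activate_concat, h, hoplus]

theorem minMem_foldl_activate_append (hnd : l.Nodup) (hs : s ∈ l) (q : List (Fin n)) :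
    minMem ((l ++ q).foldl (activate E) ∅) s = minMem (l.foldl (activate E) ∅) s := by
  obtain ⟨p₁, p₂, rfl⟩ := List.append_of_mem hs
  have hsp := List.notMem_of_nodup_append_cons hnd
  rw [List.append_assoc, List.cons_append, minMem_foldl_activate hsp, minMem_foldl_activate hsp]

theorem isActSeq_foldl_activate (hnd : l.Nodup) : IsActSeq E l (l.foldl (activate E) ∅) :=
  ⟨hnd, (nsupport_foldl_activate l).symm, rfl⟩

instance : Std.Symm (SwapRel 𝒮) where
  symm _ _ := fun ⟨l₁, l₂, a, b, h, h', hD⟩ => ⟨l₁, l₂, b, a, h', h, hD.symm⟩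

theorem SwapRel.perm (h : SwapRel 𝒮 l l') : l.Perm l' := by
  obtain ⟨l₁, l₂, a, b, rfl, rfl, -⟩ := h
  exact (List.Perm.swap b a l₂).append_left l₁

theorem SwapRel.append_right (h : SwapRel 𝒮 l l') (r : List (Fin n)) :
    SwapRel 𝒮 (l ++ r) (l' ++ r) := by
  obtain ⟨l₁, l₂, a, b, rfl, rfl, hD⟩ := h
  exact ⟨l₁, l₂ ++ r, a, b, by simp, by simp, hD⟩

theorem SwapRel.of_minMem_eq (h : SwapRel 𝒮 l l') (H : ∀ s ∈ l, minMem 𝒮 s = minMem 𝒮' s) :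
    SwapRel 𝒮' l l' := by
  obtain ⟨l₁, l₂, a, b, rfl, rfl, hD⟩ := h
  exact ⟨l₁, l₂, a, b, rfl, rfl, by rwa [← H a (by simp), ← H b (by simp)]⟩

theorem reflTransGen_swapRel_of_minMem_eq (h : ReflTransGen (SwapRel 𝒮) l l')
    (H : ∀ s ∈ l, minMem 𝒮 s = minMem 𝒮' s) : ReflTransGen (SwapRel 𝒮') l l' := by
  induction h using ReflTransGen.head_induction_on with
  | refl => exact .refl
  | head hstep _ ih =>
    exact .head (hstep.of_minMem_eq H) (ih fun s hs => H s (hstep.perm.mem_iff.2 hs))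

theorem reflTransGen_swapRel_append_cons
    (hr : ∀ u ∈ r, Disjoint (minMem 𝒮 u) (minMem 𝒮 t)) (q : List (Fin n)) :
    ReflTransGen (SwapRel 𝒮) (q ++ r ++ [t]) (q ++ t :: r) := by
  induction r generalizing q with
  | nil => simpa using .refl
  | cons u r ih =>
    have hswap : SwapRel 𝒮 (q ++ u :: t :: r) (q ++ t :: u :: r) :=
      ⟨q, r, u, t, rfl, rfl, hr u List.mem_cons_self⟩
    have ih' := ih (fun v hv => hr v (List.mem_cons_of_mem _ hv)) (q ++ [u])
    simp only [List.append_assoc, List.cons_append] at ih' ⊢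
    exact ih'.tail hswap

theorem IsActSeq.of_swapRel (h : IsActSeq E l 𝒮) (hsw : SwapRel 𝒮 l l') : IsActSeq E l' 𝒮 := by
  obtain ⟨l₁, l₂, a, b, rfl, rfl, hD⟩ := hsw
  obtain ⟨hnd, hsupp, hfold⟩ := h
  have hperm : (l₁ ++ a :: b :: l₂).Perm (l₁ ++ b :: a :: l₂) :=
    (List.Perm.swap b a l₂).append_left l₁
  refine ⟨hperm.nodup_iff.1 hnd, (List.toFinset_eq_of_perm _ _ hperm).symm.trans hsupp, ?_⟩
  have hnd' : (l₁ ++ [a] ++ b :: l₂).Nodup := by simpa using hnd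
  have hab : a ∉ oplus E (insert a (nsupport (l₁.foldl (activate E) ∅))) b := by
    have ha : a ∈ minMem 𝒮 a := by
      rw [← hfold, minMem_foldl_activate (List.notMem_of_nodup_append_cons hnd)]
      exact self_mem_oplus
    have hb := minMem_foldl_activate (E := E) (q := l₂) (List.notMem_of_nodup_append_cons hnd')
    rw [List.append_assoc, List.singleton_append, hfold] at hb
    have hprefix : (l₁ ++ [a]).toFinset = insert a l₁.toFinset := by
      ext
      simp
    rw [nsupport_foldl_activate, ← hprefix, ← hb]
    exact Finset.disjoint_left.1 hD ha
  rw [List.foldl_append, List.foldl_cons, List.foldl_cons] at hfold ⊢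
  rwa [← activate_activate_comm hab]

theorem IsActSeq.of_reflTransGen_swapRel (h : IsActSeq E l 𝒮)
    (hsw : ReflTransGen (SwapRel 𝒮) l l') : IsActSeq E l' 𝒮 := by
  induction hsw with
  | refl => exact h
  | tail _ hstep ih => exact ih.of_swapRel hstep

end ActivationSequences

section Connectivity

variable {𝒮 : Finset (Finset (Fin n))} {l l' p q r : List (Fin n)} {t u : Fin n}

/-- `S_u` is a strongly connected set of vertices activated before `t`, so if it met the component
`S_t` it would lie inside it; but `S_t` was created before `u` was activated. -/
theorem IsActSeq.disjoint_minMem (hl : IsActSeq E (p ++ [t]) 𝒮)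
    (hl' : IsActSeq E (q ++ t :: r) 𝒮) (hu : u ∈ r) :
    Disjoint (minMem 𝒮 t) (minMem 𝒮 u) := by
  obtain ⟨hnd, hsupp, rfl⟩ := hl
  obtain ⟨hnd', hsupp', hfold'⟩ := hl'
  have htp : t ∉ p := List.notMem_of_nodup_append_cons (q := []) hnd
  have huq : u ∉ q := fun huq => List.disjoint_of_nodup_append hnd' huq (List.mem_cons_of_mem _ hu)
  have hut : u ≠ t := by
    rintro rfl
    exact (List.nodup_cons.1 (List.nodup_append.1 hnd').2.1).1 hu
  have hup : u ∈ p := by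
    have : u ∈ (p ++ [t]).toFinset := by
      rw [hsupp, ← hsupp', List.mem_toFinset]
      exact List.mem_append_right _ (List.mem_cons_of_mem _ hu)
    simpa [hut] using this
  have huMt : u ∉ oplus E p.toFinset t := by
    rw [← minMem_foldl_activate (q := []) htp, ← hfold',
      minMem_foldl_activate (List.notMem_of_nodup_append_cons hnd')]
    intro h
    rcases Finset.mem_insert.1 (oplus_subset h) with h | h
    · exact hut h
    · exact huq (List.mem_toFinset.1 h)
  obtain ⟨p₁, p₂, rfl⟩ := List.append_of_mem hup
  have hMu : minMem (((p₁ ++ u :: p₂) ++ [t]).foldl (activate E) ∅) u =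
      oplus E p₁.toFinset u := by
    rw [List.append_assoc, List.cons_append]
    exact minMem_foldl_activate (List.notMem_of_nodup_append_cons (by simpa using hnd))
  have hMu_subset : oplus E p₁.toFinset u ⊆ insert t (p₁ ++ u :: p₂).toFinset :=
    oplus_subset.trans <| Finset.insert_subset (by simp) fun x hx => Finset.mem_insert_of_mem <|
      List.mem_toFinset.2 (List.mem_append_left _ (List.mem_toFinset.1 hx))
  rw [minMem_foldl_activate htp, hMu, Finset.disjoint_right]
  exact fun w hwu hwt => huMt (stronglyConnected_oplus.subset_scc hMu_subset hwu hwt self_mem_oplus)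

theorem IsActSeq.reflTransGen_swapRel (hl : IsActSeq E l 𝒮) (hl' : IsActSeq E l' 𝒮) :
    ReflTransGen (SwapRel 𝒮) l l' := by
  induction l using List.reverseRecOn generalizing 𝒮 l' with
  | nil =>
    obtain rfl : 𝒮 = ∅ := hl.2.2.symm
    obtain rfl : l' = [] := (List.toFinset_eq_empty_iff _).1 hl'.2.1
    exact .refl
  | append_singleton p t ih =>
    have ht : t ∈ l' := by
      rw [← List.mem_toFinset, hl'.2.1, ← hl.2.1]
      simp
    obtain ⟨q, r, rfl⟩ := List.append_of_mem ht
    have hmove : ReflTransGen (SwapRel 𝒮) (q ++ r ++ [t]) (q ++ t :: r) :=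
      reflTransGen_swapRel_append_cons (fun u hu => (hl.disjoint_minMem hl' hu).symm) q
    have hl'' : IsActSeq E (q ++ r ++ [t]) 𝒮 := hl'.of_reflTransGen_swapRel (symm hmove)
    have hnd := List.nodup_append.1 hl.1
    have hnd'' := List.nodup_append.1 hl''.1
    have hprefix : p.foldl (activate E) ∅ = (q ++ r).foldl (activate E) ∅ :=
      foldl_activate_eq_of_concat_eq (List.notMem_of_nodup_append_cons (q := []) hl.1)
        (List.notMem_of_nodup_append_cons (q := []) hl''.1) (hl.2.2.trans hl''.2.2.symm)
    have hp := ih (isActSeq_foldl_activate hnd.1)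
      (hprefix ▸ isActSeq_foldl_activate hnd''.1)
    have hminMem : ∀ s ∈ p, minMem (p.foldl (activate E) ∅) s = minMem 𝒮 s := fun s hs =>
      hl.2.2 ▸ (minMem_foldl_activate_append hnd.1 hs [t]).symm
    exact ((reflTransGen_swapRel_of_minMem_eq hp hminMem).lift (· ++ [t])
      fun _ _ h => h.append_right [t]).trans hmove

end Connectivity

end

theorem stmt3_general (n : ℕ) (E : Fin n → Fin n → Prop)
    (𝒮 : Finset (Finset (Fin n))) :
    (∀ l l' : List (Fin n), IsActSeq E l 𝒮 → SwapRel 𝒮 l l' → IsActSeq E l' 𝒮) ∧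
    (∀ l l' : List (Fin n), IsActSeq E l 𝒮 → IsActSeq E l' 𝒮 →
      Relation.ReflTransGen (SwapRel 𝒮) l l') :=
  ⟨fun _ _ hl hsw => hl.of_swapRel hsw, fun _ _ hl hl' => hl.reflTransGen_swapRel hl'⟩

/-- Swapping an exchangeable adjacent pair in an activation sequence yields an activation
sequence for the same maximal nested collection; moreover any two activation sequences
yielding the same maximal nested collection are connected by such swaps. -/
theorem stmt3 (n : ℕ) (E : Fin n → Fin n → Prop) (hE : ∀ i, ¬ E i i)
    (𝒮 : Finset (Finset (Fin n))) (h𝒮 : MaximalNested E 𝒮) :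
    (∀ l l' : List (Fin n), IsActSeq E l 𝒮 → SwapRel 𝒮 l l' → IsActSeq E l' 𝒮) ∧
    (∀ l l' : List (Fin n), IsActSeq E l 𝒮 → IsActSeq E l' 𝒮 →
      Relation.ReflTransGen (SwapRel 𝒮) l l') :=
  stmt3_general n E 𝒮
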